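/- arXiv:physics/9910001 — 4 statements merged into one kernel-verified Lean document; each statement's English description precedes it below -/
import Mathlib

section
/- Let n ≥ 4 and let λ₁ > λ₂ > |λ₃| > 0 be real numbers (the three-dimensional asymmetric top case). Then a matrix K in SO(n−1) satisfies ∃ Q ∈ SO(3) with Q Λ Kᵀ = Λ if and only if K is block diagonal of the form K = diag(A, B) with upper-left 3 × 3 block A ∈ V₄ and lower-right (n−4) × (n−4) block B ∈ SO(n−4) (and all off-diagonal blocks zero). -/
/-- The `3 × (n-1)` matrix `Λ` with `Λ₁₁ = λ₁`, `Λ₂₂ = λ₂`, `Λ₃₃ = λ₃` and all other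
entries zero. -/
def Lam (n : ℕ) (l1 l2 l3 : ℝ) : Matrix (Fin 3) (Fin (n - 1)) ℝ :=
  Matrix.of fun i j => if (j : ℕ) = (i : ℕ) then ![l1, l2, l3] i else 0

/-- The `n × n` block diagonal matrix `diag(A, B)` built from an `a × a` block `A` and a
`b × b` block `B`, where `a + b = n`. -/
def embedBlocks {a b n : ℕ} (h : a + b = n) (A : Matrix (Fin a) (Fin a) ℝ)
    (B : Matrix (Fin b) (Fin b) ℝ) : Matrix (Fin n) (Fin n) ℝ :=
  Matrix.reindex (finSumFinEquiv.trans (finCongr h)) (finSumFinEquiv.trans (finCongr h))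
    (Matrix.fromBlocks A 0 0 B)

set_option maxHeartbeats 2000000 in
/-- Three-dimensional asymmetric top case: for `n ≥ 4` and `λ₁ > λ₂ > |λ₃| > 0`, a matrix
`K ∈ SO(n-1)` satisfies `∃ Q ∈ SO(3), Q Λ Kᵀ = Λ` iff `K = diag(A, B)` with `A ∈ V₄`
(diagonal with entries `±1` and determinant `1`) and `B ∈ SO(n-4)`. -/
theorem stmt_5 (n : ℕ) (hn : 4 ≤ n) (l1 l2 l3 : ℝ)
    (h12 : l2 < l1) (h23 : |l3| < l2) (h3 : 0 < |l3|)
    (K : Matrix (Fin (n - 1)) (Fin (n - 1)) ℝ)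
    (hK : K.transpose * K = 1 ∧ K.det = 1) :
    (∃ Q : Matrix (Fin 3) (Fin 3) ℝ,
        (Q.transpose * Q = 1 ∧ Q.det = 1) ∧
        Q * Lam n l1 l2 l3 * K.transpose = Lam n l1 l2 l3) ↔
      ∃ (A : Matrix (Fin 3) (Fin 3) ℝ) (B : Matrix (Fin (n - 4)) (Fin (n - 4)) ℝ),
        (∀ i j, i ≠ j → A i j = 0) ∧ (∀ i, A i i = 1 ∨ A i i = -1) ∧ A.det = 1 ∧
        (B.transpose * B = 1 ∧ B.det = 1) ∧
        K = embedBlocks (by omega : 3 + (n - 4) = n - 1) A B := by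
  obtain ⟨hKo, hKd⟩ := hK
  have hsum : 3 + (n - 4) = n - 1 := by omega
  have h3n : 3 ≤ n - 1 := by omega
  set v : Fin 3 → ℝ := ![l1, l2, l3] with hv
  set ι : Fin 3 → Fin (n - 1) := Fin.castLE h3n with hι
  set e : (Fin 3 ⊕ Fin (n - 4)) ≃ Fin (n - 1) := finSumFinEquiv.trans (finCongr hsum) with he
  have hι_inj : Function.Injective ι := Fin.castLE_injective h3n
  have hl2 : 0 < l2 := h3.trans h23
  have hl1 : 0 < l1 := hl2.trans h12
  have hl3 : l3 ≠ 0 := abs_pos.mp h3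
  have hv0 : v 0 = l1 := rfl
  have hv1 : v 1 = l2 := rfl
  have hv2 : v 2 = l3 := rfl
  have hvne : ∀ i, v i ≠ 0 := by
    intro i
    fin_cases i
    · exact ne_of_gt hl1
    · exact ne_of_gt hl2
    · exact hl3
  have hd_ne : ∀ i k : Fin 3, i ≠ k → v i ^ 2 ≠ v k ^ 2 := by
    have h32 : l3 ^ 2 < l2 ^ 2 := by nlinarith [sq_abs l3, abs_nonneg l3]
    have h21 : l2 ^ 2 < l1 ^ 2 := by nlinarith
    intro i k hik
    fin_cases i <;> fin_cases k <;> simp_all [hv0, hv1, hv2] <;> nlinarith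
  -- entries of Lam
  have hlam : ∀ (i : Fin 3) (j : Fin (n - 1)),
      Lam n l1 l2 l3 i j = if j = ι i then v i else 0 := by
    intro i j
    by_cases hj : j = ι i
    · subst hj; simp [Lam, hι, hv]
    · have hjn : (j : ℕ) ≠ (i : ℕ) := by
        intro hc; exact hj (Fin.ext (by simpa [hι] using hc))
      simp [Lam, hj, hjn, hv]
  -- values of e
  have heL : ∀ a : Fin 3, e (Sum.inl a) = ι a := by
    intro a; apply Fin.ext; simp [he, hι]
  have heR : ∀ b : Fin (n - 4), ((e (Sum.inr b)) : ℕ) = 3 + (b : ℕ) := by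
    intro b; simp [he]
  have heR_ne : ∀ (b : Fin (n - 4)) (a : Fin 3), e (Sum.inr b) ≠ ι a := by
    intro b a hc
    have h1 := heR b
    have h2 : ((ι a : Fin (n - 1)) : ℕ) = (a : ℕ) := by simp [hι]
    have h3 : ((e (Sum.inr b)) : ℕ) = ((ι a : Fin (n - 1)) : ℕ) := by rw [hc]
    have := a.isLt
    omega
  -- entries of embedBlocks
  have hE : ∀ (A : Matrix (Fin 3) (Fin 3) ℝ) (B : Matrix (Fin (n - 4)) (Fin (n - 4)) ℝ)
      (s t : Fin 3 ⊕ Fin (n - 4)),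
      embedBlocks hsum A B (e s) (e t) = Matrix.fromBlocks A 0 0 B s t := by
    intro A B s t
    simp [embedBlocks, he]
  constructor
  · rintro ⟨Q, ⟨hQo, hQd⟩, hQΛ⟩
    set Λ := Lam n l1 l2 l3 with hΛ
    -- D = Λ Λᵀ is diagonal with distinct entries
    have hD : ∀ i k : Fin 3, (Λ * Λ.transpose) i k = if i = k then v i ^ 2 else 0 := by
      intro i k
      rw [Matrix.mul_apply]
      simp only [Matrix.transpose_apply, hlam]
      rw [Finset.sum_congr rfl (fun j _ => by
        rw [ite_mul, zero_mul] : ∀ j ∈ Finset.univ, _ = if j = ι i then (v i * if j = ι k then v k else 0) else 0)]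
      rw [Finset.sum_ite_eq' Finset.univ (ι i)]
      simp only [Finset.mem_univ, if_true]
      by_cases hik : i = k
      · subst hik; simp [sq]
      · have : ι i ≠ ι k := fun hc => hik (hι_inj hc)
        simp [this, hik]
    -- Q commutes with D
    have hQDQ : Q * (Λ * Λ.transpose) * Q.transpose = Λ * Λ.transpose := by
      have h1 : (Q * Λ * K.transpose) * (Q * Λ * K.transpose).transpose
          = Λ * Λ.transpose := by rw [hQΛ]
      calc Q * (Λ * Λ.transpose) * Q.transpose
          = Q * Λ * (K.transpose * K) * Λ.transpose * Q.transpose := by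
            rw [hKo]; simp [Matrix.mul_assoc]
        _ = (Q * Λ * K.transpose) * (Q * Λ * K.transpose).transpose := by
            simp only [Matrix.transpose_mul, Matrix.transpose_transpose, Matrix.mul_assoc]
        _ = Λ * Λ.transpose := h1
    have hQD : Q * (Λ * Λ.transpose) = (Λ * Λ.transpose) * Q := by
      have := congrArg (· * Q) hQDQ
      simpa [Matrix.mul_assoc, hQo] using this
    -- Q is diagonal
    have hQoff : ∀ i k : Fin 3, i ≠ k → Q i k = 0 := by
      intro i k hik
      have h1 : (Q * (Λ * Λ.transpose)) i k = Q i k * v k ^ 2 := by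
        rw [Matrix.mul_apply]
        rw [Finset.sum_congr rfl (fun j _ => by rw [hD] : ∀ j ∈ Finset.univ,
          _ = Q i j * if j = k then v j ^ 2 else 0)]
        simp
      have h2 : ((Λ * Λ.transpose) * Q) i k = v i ^ 2 * Q i k := by
        rw [Matrix.mul_apply]
        rw [Finset.sum_congr rfl (fun j _ => by rw [hD] : ∀ j ∈ Finset.univ,
          _ = (if i = j then v i ^ 2 else 0) * Q j k)]
        simp
      have h3 : Q i k * v k ^ 2 = v i ^ 2 * Q i k := by
        rw [← h1, ← h2, hQD]
      have := hd_ne i k hik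
      have : Q i k * (v k ^ 2 - v i ^ 2) = 0 := by ring_nf; linarith [h3]
      rcases mul_eq_zero.mp this with h | h
      · exact h
      · exact absurd (by linarith : v i ^ 2 = v k ^ 2) (hd_ne i k hik)
    have hq : ∀ i k : Fin 3, Q i k = if i = k then Q i i else 0 := by
      intro i k
      by_cases hik : i = k
      · subst hik; simp
      · simp [hik, hQoff i k hik]
    -- diagonal entries are ±1
    have hQpm : ∀ i : Fin 3, Q i i = 1 ∨ Q i i = -1 := by
      intro i
      have h1 : (Q.transpose * Q) i i = 1 := by rw [hQo]; simp
      rw [Matrix.mul_apply] at h1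
      simp only [Matrix.transpose_apply] at h1
      rw [Finset.sum_congr rfl (fun k _ => by rw [hq k i] : ∀ k ∈ Finset.univ,
        _ = (if k = i then Q k k else 0) * Q k i)] at h1
      simp only [ite_mul, zero_mul] at h1
      rw [Finset.sum_ite_eq' Finset.univ i] at h1
      simp only [Finset.mem_univ, if_true] at h1
      exact mul_self_eq_one_iff.mp h1
    -- det Q = product of diagonal
    have hQdetprod : Q 0 0 * Q 1 1 * Q 2 2 = 1 := by
      rw [Matrix.det_fin_three] at hQd
      rw [hQoff 0 1 (by decide), hQoff 0 2 (by decide), hQoff 1 0 (by decide),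
        hQoff 1 2 (by decide), hQoff 2 0 (by decide), hQoff 2 1 (by decide)] at hQd
      linarith [hQd]
    -- Λ Kᵀ = Q Λ  (since Qᵀ = Q)
    have hQsymm : Q.transpose = Q := by
      ext i k
      rw [Matrix.transpose_apply, hq k i, hq i k]
      by_cases hik : i = k
      · subst hik; simp
      · simp [hik, Ne.symm hik]
    have hΛK : Λ * K.transpose = Q * Λ := by
      have := congrArg (Q.transpose * ·) hQΛ
      rw [← Matrix.mul_assoc, ← Matrix.mul_assoc, hQo, Matrix.one_mul, hQsymm] at this
      exact this
    -- column structure of K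
    have hcol : ∀ (i : Fin 3) (j : Fin (n - 1)),
        K j (ι i) = if j = ι i then Q i i else 0 := by
      intro i j
      have h1 : (Λ * K.transpose) i j = v i * K j (ι i) := by
        rw [Matrix.mul_apply]
        simp only [Matrix.transpose_apply, hlam]
        rw [Finset.sum_congr rfl (fun c _ => by rw [ite_mul, zero_mul] : ∀ c ∈ Finset.univ,
          _ = if c = ι i then v i * K j c else 0)]
        rw [Finset.sum_ite_eq' Finset.univ (ι i)]
        simp
      have h2 : (Q * Λ) i j = Q i i * (if j = ι i then v i else 0) := by
        rw [Matrix.mul_apply]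
        rw [Finset.sum_congr rfl (fun k _ => by rw [hq i k, ite_mul, zero_mul] :
          ∀ k ∈ Finset.univ, _ = if i = k then Q i i * Λ k j else 0)]
        rw [Finset.sum_ite_eq Finset.univ i]
        simp [hlam]
      have h3 : v i * K j (ι i) = Q i i * (if j = ι i then v i else 0) := by
        rw [← h1, ← h2, hΛK]
      by_cases hj : j = ι i
      · simp only [hj, if_true] at h3 ⊢
        have : v i * K (ι i) (ι i) = v i * Q i i := by rw [h3]; ring
        exact mul_left_cancel₀ (hvne i) this
      · simp only [hj, if_false, mul_zero] at h3 ⊢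
        rcases mul_eq_zero.mp h3 with h | h
        · exact absurd h (hvne i)
        · exact h
    -- K Kᵀ = 1
    have hKKt : K * K.transpose = 1 := mul_eq_one_comm.mp hKo
    -- row structure of K
    have hrow : ∀ (i : Fin 3) (c : Fin (n - 1)), c ≠ ι i → K (ι i) c = 0 := by
      intro i c hc
      have h1 : (K * K.transpose) (ι i) (ι i) = 1 := by rw [hKKt]; exact Matrix.one_apply_eq _
      rw [Matrix.mul_apply] at h1
      simp only [Matrix.transpose_apply] at h1
      have hdiag : K (ι i) (ι i) * K (ι i) (ι i) = 1 := by
        rw [hcol i (ι i)]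
        simp only [if_true]
        rcases hQpm i with h | h <;> rw [h] <;> norm_num
      have hsplit : K (ι i) (ι i) * K (ι i) (ι i)
          + ∑ x ∈ Finset.univ.erase (ι i), K (ι i) x * K (ι i) x
          = ∑ x : Fin (n - 1), K (ι i) x * K (ι i) x :=
        Finset.add_sum_erase Finset.univ (fun x => K (ι i) x * K (ι i) x)
          (Finset.mem_univ (ι i))
      have hzero : ∑ x ∈ Finset.univ.erase (ι i), K (ι i) x * K (ι i) x = 0 := by
        rw [h1] at hsplit
        linarith [hsplit, hdiag]
      have := (Finset.sum_eq_zero_iff_of_nonneg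
        (fun x _ => mul_self_nonneg (K (ι i) x))).mp hzero c
        (Finset.mem_erase.mpr ⟨hc, Finset.mem_univ c⟩)
      exact mul_self_eq_zero.mp this
    -- build A and B
    set AA : Matrix (Fin 3) (Fin 3) ℝ := Matrix.diagonal (fun i => Q i i) with hAA
    set BB : Matrix (Fin (n - 4)) (Fin (n - 4)) ℝ :=
      Matrix.of (fun i j => K (e (Sum.inr i)) (e (Sum.inr j))) with hBB
    have hAAd : AA.det = 1 := by
      rw [hAA, Matrix.det_diagonal, Fin.prod_univ_three]
      exact hQdetprod
    have hKeq : K = embedBlocks hsum AA BB := by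
      ext p q
      obtain ⟨s, rfl⟩ := e.surjective p
      obtain ⟨t, rfl⟩ := e.surjective q
      rw [hE]
      rcases s with a | a <;> rcases t with b | b
      · simp only [Matrix.fromBlocks_apply₁₁, hAA, Matrix.diagonal_apply]
        rw [heL a, heL b, hcol b (ι a)]
        by_cases hab : a = b
        · subst hab; simp
        · have : ι a ≠ ι b := fun hc => hab (hι_inj hc)
          simp [hab, this]
      · simp only [Matrix.fromBlocks_apply₁₂, Matrix.zero_apply]
        rw [heL a]
        exact hrow a _ (heR_ne b a)
      · simp only [Matrix.fromBlocks_apply₂₁, Matrix.zero_apply]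
        rw [heL b, hcol b _]
        simp [heR_ne a b]
      · simp only [Matrix.fromBlocks_apply₂₂, hBB, Matrix.of_apply]
    refine ⟨AA, BB, ?_, ?_, hAAd, ⟨?_, ?_⟩, ?_⟩
    · intro i j hij; exact Matrix.diagonal_apply_ne _ hij
    · intro i; simpa [hAA] using hQpm i
    · -- Bᵀ B = 1
      ext i j
      rw [Matrix.mul_apply]
      simp only [Matrix.transpose_apply, hBB, Matrix.of_apply]
      have h1 : (K.transpose * K) (e (Sum.inr i)) (e (Sum.inr j))
          = if (e (Sum.inr i)) = (e (Sum.inr j)) then (1:ℝ) else 0 := by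
        rw [hKo, Matrix.one_apply]
      rw [Matrix.mul_apply] at h1
      simp only [Matrix.transpose_apply] at h1
      rw [← Equiv.sum_comp e (fun c => K c (e (Sum.inr i)) * K c (e (Sum.inr j)))] at h1
      rw [Fintype.sum_sum_type] at h1
      have h2 : ∀ a : Fin 3, K (e (Sum.inl a)) (e (Sum.inr i)) * K (e (Sum.inl a)) (e (Sum.inr j)) = 0 := by
        intro a
        rw [heL a, hrow a _ (heR_ne i a)]
        ring
      rw [Finset.sum_congr rfl (fun a _ => h2 a), Finset.sum_const, smul_zero, zero_add] at h1
      rw [h1]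
      have : (e (Sum.inr i) = e (Sum.inr j)) ↔ (i = j) := by
        constructor
        · intro hc; exact Sum.inr.inj (e.injective hc)
        · rintro rfl; rfl
      by_cases hij : i = j
      · subst hij; simp [Matrix.one_apply]
      · rw [if_neg (fun hc => hij (this.mp hc)), Matrix.one_apply_ne hij]
    · -- det B = 1
      have hdet : K.det = AA.det * BB.det := by
        rw [hKeq]
        unfold embedBlocks
        rw [Matrix.det_reindex_self, Matrix.det_fromBlocks_zero₂₁]
      rw [hKd, hAAd, one_mul] at hdet
      exact hdet.symm
    · -- K = embedBlocks
      exact hKeq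
  · rintro ⟨A, B, hAoff, hAdiag, hAdet, ⟨hBo, hBd⟩, rfl⟩
    have hq : ∀ i k : Fin 3, A i k = if i = k then A i i else 0 := by
      intro i k
      by_cases hik : i = k
      · subst hik; simp
      · simp [hik, hAoff i k hik]
    refine ⟨A, ⟨?_, hAdet⟩, ?_⟩
    · -- Aᵀ A = 1
      ext i j
      rw [Matrix.mul_apply, Matrix.one_apply]
      simp only [Matrix.transpose_apply]
      rw [Finset.sum_congr rfl (fun k _ => by rw [hq k i, ite_mul, zero_mul] :
        ∀ k ∈ Finset.univ, _ = if k = i then A k k * A k j else 0)]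
      rw [Finset.sum_ite_eq' Finset.univ i]
      simp only [Finset.mem_univ, if_true]
      by_cases hij : i = j
      · subst hij
        rw [if_pos rfl]
        rcases hAdiag i with h | h <;> rw [h] <;> norm_num
      · rw [if_neg hij, hAoff i j hij, mul_zero]
    · -- A Λ Kᵀ = Λ
      ext i j
      have hAΛ : ∀ c, (A * Lam n l1 l2 l3) i c = if c = ι i then A i i * v i else 0 := by
        intro c
        rw [Matrix.mul_apply]
        rw [Finset.sum_congr rfl (fun k _ => by rw [hq i k, ite_mul, zero_mul] :
          ∀ k ∈ Finset.univ, _ = if i = k then A i i * Lam n l1 l2 l3 k c else 0)]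
        rw [Finset.sum_ite_eq Finset.univ i]
        simp only [Finset.mem_univ, if_true]
        rw [hlam]
        by_cases hc : c = ι i <;> simp [hc]
      rw [Matrix.mul_apply]
      simp only [Matrix.transpose_apply]
      rw [Finset.sum_congr rfl (fun c _ => by rw [hAΛ c, ite_mul, zero_mul] :
        ∀ c ∈ Finset.univ, _ = if c = ι i then A i i * v i
          * (embedBlocks hsum A B) j c else 0)]
      rw [Finset.sum_ite_eq' Finset.univ (ι i)]
      simp only [Finset.mem_univ, if_true]
      obtain ⟨s, rfl⟩ := e.surjective j
      rcases s with a | a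
      · have h1 : (embedBlocks hsum A B) (e (Sum.inl a)) (ι i) = A a i := by
          rw [← heL i, hE]
          simp
        rw [h1, hlam, heL a, hq a i]
        by_cases hai : a = i
        · subst hai
          rw [if_pos rfl, if_pos rfl]
          rcases hAdiag a with h | h <;> rw [h] <;> ring
        · have : ι a ≠ ι i := fun hc => hai (hι_inj hc)
          rw [if_neg hai, if_neg this]
          ring
      · have h1 : (embedBlocks hsum A B) (e (Sum.inr a)) (ι i) = 0 := by
          rw [← heL i, hE]
          simp
        rw [h1, hlam, if_neg (heR_ne a i)]
        ring
end

section
/- Let n ≥ 4 and let λ₁ = λ₂ > 0 with λ₃ = 0 (the planar symmetric top case). Then a matrix K in SO(n−1) satisfies ∃ Q ∈ SO(3) with Q Λ Kᵀ = Λ if and only if K is block diagonal of the form K = diag(A, B), where A is a 2 × 2 real orthogonal matrix occupying the upper-left 2 × 2 block, B is an (n−3) × (n−3) real orthogonal matrix occupying the lower-right block, det A · det B = 1, and all off-diagonal blocks are zero. -/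
/-!
Write `Λ = l • P` in block form for `ℝ³ = ℝ² ⊕ ℝ` and `ℝⁿ⁻¹ = ℝ² ⊕ ℝⁿ⁻³`, so that `P` is the
identity on the `ℝ²` blocks and zero elsewhere. Since `K` is orthogonal, `Q Λ Kᵀ = Λ` gives
`Q Λ = Λ K`; the columns of `Q Λ` outside the first two vanish, while the top-right block of
`Λ K` is `l • K₁₂`, so `K₁₂ = 0`. An orthogonal matrix with a zero top-right block is block
diagonal with orthogonal blocks. Conversely, `K = diag(A, B)` is fixed by `Q = diag(A, det A)`.
-/

open Matrix

namespace Matrix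

section Reindex

variable {R m n m' n' : Type*} [CommRing R] [Fintype m] [Fintype n] [Fintype m'] [Fintype n']

theorem transpose_mul_self_reindex_eq_one_iff [DecidableEq m] [DecidableEq m'] (e : m ≃ m')
    (K : Matrix m m R) : (reindex e e K)ᵀ * reindex e e K = 1 ↔ Kᵀ * K = 1 := by
  rw [transpose_reindex, reindex_apply, reindex_apply, submatrix_mul_equiv, ← reindex_apply]
  exact (reindex e e).injective.eq_iff' (submatrix_one_equiv e.symm)

theorem reindex_mul_mul_transpose_eq_iff (e₁ : m ≃ m') (e₂ : n ≃ n') (Q : Matrix m m R)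
    (L : Matrix m n R) (K : Matrix n n R) :
    reindex e₁ e₁ Q * reindex e₁ e₂ L * (reindex e₂ e₂ K)ᵀ = reindex e₁ e₂ L ↔ Q * L * Kᵀ = L := by
  rw [transpose_reindex, reindex_apply, reindex_apply, reindex_apply, submatrix_mul_equiv,
    submatrix_mul_equiv, ← reindex_apply, ← reindex_apply]
  exact (reindex e₁ e₂).injective.eq_iff

end Reindex

variable {m n : Type*} [Fintype m]

theorem eq_zero_of_transpose_mul_self_eq_zero {A : Matrix m n ℝ} (h : Aᵀ * A = 0) : A = 0 := by
  rw [← conjTranspose_eq_transpose_of_trivial] at h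
  exact conjTranspose_mul_self_eq_zero.mp h

theorem orthogonal_fromBlocks_zero₁₂ [Fintype n] [DecidableEq m] [DecidableEq n]
    {A : Matrix m m ℝ} {C : Matrix n m ℝ} {D : Matrix n n ℝ}
    (h : (fromBlocks A 0 C D)ᵀ * fromBlocks A 0 C D = 1) :
    C = 0 ∧ Aᵀ * A = 1 ∧ Dᵀ * D = 1 := by
  have h' : fromBlocks A 0 C D * (fromBlocks A 0 C D)ᵀ = 1 := mul_eq_one_comm.mp h
  simp only [fromBlocks_transpose, fromBlocks_multiply, transpose_zero, Matrix.mul_zero,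
    Matrix.zero_mul, add_zero, zero_add, ← fromBlocks_one, fromBlocks_inj] at h h'
  have hA : Aᵀ * A = 1 := mul_eq_one_comm.mp h'.1
  refine ⟨eq_zero_of_transpose_mul_self_eq_zero ?_, hA, h.2.2.2⟩
  simpa [hA] using h.1

end Matrix

variable {m k p : Type*} [Fintype m] [DecidableEq m]

variable (m k p) in
def planarLam (l : ℝ) : Matrix (m ⊕ k) (m ⊕ p) ℝ := fromBlocks (l • 1) 0 0 0

theorem mul_planarLam [Fintype k] (l : ℝ) (Q : Matrix (m ⊕ k) (m ⊕ k) ℝ) :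
    Q * planarLam m k p l = fromBlocks (l • Q.toBlocks₁₁) 0 (l • Q.toBlocks₂₁) 0 := by
  rw [planarLam, ← fromBlocks_toBlocks Q, fromBlocks_multiply]
  simp

theorem planarLam_mul [Fintype p] (l : ℝ) (K : Matrix (m ⊕ p) (m ⊕ p) ℝ) :
    planarLam m k p l * K = fromBlocks (l • K.toBlocks₁₁) (l • K.toBlocks₁₂) 0 0 := by
  rw [planarLam, ← fromBlocks_toBlocks K, fromBlocks_multiply]
  simp

theorem toBlocks₁₂_eq_zero_of_mul_planarLam_eq [Fintype k] [Fintype p] {l : ℝ} (hl : l ≠ 0)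
    {Q : Matrix (m ⊕ k) (m ⊕ k) ℝ} {K : Matrix (m ⊕ p) (m ⊕ p) ℝ}
    (h : Q * planarLam m k p l = planarLam m k p l * K) : K.toBlocks₁₂ = 0 := by
  rw [mul_planarLam, planarLam_mul, fromBlocks_inj] at h
  simpa [hl] using h.2.1.symm

theorem exists_rotation_mul_planarLam_mul_transpose_iff [Fintype k] [DecidableEq k] [Unique k]
    [Fintype p] [DecidableEq p] {l : ℝ} (hl : l ≠ 0)
    {K : Matrix (m ⊕ p) (m ⊕ p) ℝ} (hK : Kᵀ * K = 1 ∧ K.det = 1) :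
    (∃ Q : Matrix (m ⊕ k) (m ⊕ k) ℝ, (Qᵀ * Q = 1 ∧ Q.det = 1) ∧
        Q * planarLam m k p l * Kᵀ = planarLam m k p l) ↔
      ∃ (A : Matrix m m ℝ) (B : Matrix p p ℝ),
        Aᵀ * A = 1 ∧ Bᵀ * B = 1 ∧ A.det * B.det = 1 ∧ K = fromBlocks A 0 0 B := by
  constructor
  · rintro ⟨Q, -, hQ⟩
    have hQK : Q * planarLam m k p l = planarLam m k p l * K := by
      simpa only [Matrix.mul_assoc, hK.1, Matrix.mul_one] using congrArg (· * K) hQ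
    have hKb : K = fromBlocks K.toBlocks₁₁ 0 K.toBlocks₂₁ K.toBlocks₂₂ := by
      rw [← toBlocks₁₂_eq_zero_of_mul_planarLam_eq hl hQK, fromBlocks_toBlocks]
    obtain ⟨h21, hA, hB⟩ := orthogonal_fromBlocks_zero₁₂ (hKb ▸ hK.1)
    refine ⟨_, _, hA, hB, ?_, hKb.trans (by rw [h21])⟩
    rw [← det_fromBlocks_zero₁₂, ← hKb, hK.2]
  · rintro ⟨A, B, hA, -, -, rfl⟩
    have hdetA : A.det * A.det = 1 := by simpa using congrArg det hA
    refine ⟨fromBlocks A 0 0 (A.det • 1), ⟨?_, ?_⟩, ?_⟩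
    · simp [fromBlocks_transpose, fromBlocks_multiply, hA, smul_smul, hdetA]
    · simp [hdetA]
    · rw [mul_planarLam, planarLam]
      simp [fromBlocks_transpose, fromBlocks_multiply, mul_eq_one_comm.mp hA]

theorem Lam_eq_reindex_planarLam {n : ℕ} (h : 2 + (n - 3) = n - 1) (l : ℝ) :
    Lam n l l 0 = reindex finSumFinEquiv (finSumFinEquiv.trans (finCongr h))
      (planarLam (Fin 2) (Fin 1) (Fin (n - 3)) l) := by
  ext i j
  obtain ⟨x, rfl⟩ := (finSumFinEquiv (m := 2) (n := 1)).surjective i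
  obtain ⟨y, rfl⟩ := (finSumFinEquiv.trans (finCongr h)).surjective j
  rcases x with x | x <;>
    rw [reindex_apply, submatrix_apply, Equiv.symm_apply_apply, Equiv.symm_apply_apply, Lam,
      of_apply]
  · have hx : ![l, l, 0] (Fin.castAdd 1 x) = l := by fin_cases x <;> rfl
    rw [finSumFinEquiv_apply_left, hx]
    rcases y with y | y <;> simp [planarLam, Matrix.one_apply, Fin.ext_iff, eq_comm]
    omega
  · have hx : ![l, l, 0] (Fin.natAdd 2 x) = 0 := by fin_cases x; rfl
    rw [finSumFinEquiv_apply_right, hx]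
    rcases y with y | y <;> simp [planarLam]

/-- Planar symmetric top case: for `n ≥ 4`, `λ₁ = λ₂ > 0` and `λ₃ = 0`, a matrix
`K ∈ SO(n-1)` satisfies `∃ Q ∈ SO(3), Q Λ Kᵀ = Λ` iff `K = diag(A, B)` with `A ∈ O(2)`,
`B ∈ O(n-3)`, and `det A · det B = 1`. -/
theorem stmt_9 (n : ℕ) (hn : 4 ≤ n) (l : ℝ) (hl : 0 < l)
    (K : Matrix (Fin (n - 1)) (Fin (n - 1)) ℝ)
    (hK : K.transpose * K = 1 ∧ K.det = 1) :
    (∃ Q : Matrix (Fin 3) (Fin 3) ℝ,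
        (Q.transpose * Q = 1 ∧ Q.det = 1) ∧
        Q * Lam n l l 0 * K.transpose = Lam n l l 0) ↔
      ∃ (A : Matrix (Fin 2) (Fin 2) ℝ) (B : Matrix (Fin (n - 3)) (Fin (n - 3)) ℝ),
        A.transpose * A = 1 ∧
        B.transpose * B = 1 ∧
        A.det * B.det = 1 ∧
        K = embedBlocks (by omega : 2 + (n - 3) = n - 1) A B := by
  have h : 2 + (n - 3) = n - 1 := by omega
  set e := finSumFinEquiv.trans (finCongr h)
  set e₃ : Fin 2 ⊕ Fin 1 ≃ Fin 3 := finSumFinEquiv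
  obtain ⟨K, rfl⟩ := (reindex e e).surjective K
  rw [transpose_mul_self_reindex_eq_one_iff, det_reindex_self] at hK
  rw [Lam_eq_reindex_planarLam h]
  calc _ ↔ ∃ Q : Matrix (Fin 2 ⊕ Fin 1) (Fin 2 ⊕ Fin 1) ℝ, (Qᵀ * Q = 1 ∧ Q.det = 1) ∧
          Q * planarLam (Fin 2) (Fin 1) (Fin (n - 3)) l * Kᵀ = planarLam _ _ _ l := by
        refine ((reindex e₃ e₃).exists_congr fun Q => ?_).symm
        rw [transpose_mul_self_reindex_eq_one_iff, det_reindex_self,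
          reindex_mul_mul_transpose_eq_iff]
    _ ↔ _ := exists_rotation_mul_planarLam_mul_transpose_iff hl.ne' hK
    _ ↔ _ := exists₂_congr fun _ _ => and_congr_right' <| and_congr_right' <|
        and_congr_right' (reindex e e).injective.eq_iff.symm
end

section
/- Let X and Y be 2 × 2 complex matrices that are anti-Hermitian (Xᴴ = −X, Yᴴ = −Y) and traceless, and let P be the 4 × 4 real orthogonal matrix P = (1/√2)·[[1,1,0,0],[−1,1,0,0],[0,0,1,1],[0,0,1,−1]]. Then the 4 × 4 real matrices g(X) and P g(Y) Pᵀ commute: g(X)·(P g(Y) Pᵀ) = (P g(Y) Pᵀ)·g(X). -/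
/-- The realification map `g` for `2 × 2` complex matrices: the `4 × 4` real matrix
obtained by replacing each entry `a + ib` by the `2 × 2` real block `[[a, -b], [b, a]]`. -/
def gmap (M : Matrix (Fin 2) (Fin 2) ℂ) : Matrix (Fin 4) (Fin 4) ℝ :=
  Matrix.of fun i j =>
    let a : ℂ := M ⟨i.val / 2, by omega⟩ ⟨j.val / 2, by omega⟩
    if i.val % 2 = 0 then (if j.val % 2 = 0 then a.re else -a.im)
    else (if j.val % 2 = 0 then a.im else a.re)

/-- The orthogonal matrix `P = (1/√2)·[[1,1,0,0],[−1,1,0,0],[0,0,1,1],[0,0,1,−1]]`. -/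
noncomputable def Pmat : Matrix (Fin 4) (Fin 4) ℝ :=
  (1 / Real.sqrt 2) • !![1, 1, 0, 0; -1, 1, 0, 0; 0, 0, 1, 1; 0, 0, 1, -1]

lemma gmap_eq (X : Matrix (Fin 2) (Fin 2) ℂ)
    (hX : X.conjTranspose = -X) (hX0 : X.trace = 0) :
    gmap X = !![0, -(X 0 0).im, (X 0 1).re, -(X 0 1).im;
                (X 0 0).im, 0, (X 0 1).im, (X 0 1).re;
                -(X 0 1).re, -(X 0 1).im, 0, (X 0 0).im;
                (X 0 1).im, -(X 0 1).re, -(X 0 0).im, 0] := by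
  have h00 := congrFun (congrFun hX 0) 0
  have h10 := congrFun (congrFun hX 1) 0
  have htr : X 0 0 + X 1 1 = 0 := by
    simpa [Matrix.trace, Matrix.diag, Fin.sum_univ_succ] using hX0
  simp [Matrix.conjTranspose_apply] at h00 h10
  have e1 : (X 0 0).re = 0 := by
    have := congrArg Complex.re h00; simp at this; linarith
  have e2 : X 1 1 = -X 0 0 := by linear_combination htr
  have e3 : (X 1 1).re = 0 := by rw [e2]; simp [e1]
  have e4 : (X 1 1).im = -(X 0 0).im := by rw [e2]; simp
  have e5 : (X 1 0).re = -(X 0 1).re := by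
    have := congrArg Complex.re h10; simp at this; linarith
  have e6 : (X 1 0).im = (X 0 1).im := by
    have := congrArg Complex.im h10; simp at this; linarith
  ext i j
  fin_cases i <;> fin_cases j <;>
    norm_num [gmap, e1, e3, e4, e5, e6]

def Qmat : Matrix (Fin 4) (Fin 4) ℝ := !![1, 1, 0, 0; -1, 1, 0, 0; 0, 0, 1, 1; 0, 0, 1, -1]

lemma QT : Qmat.transpose = !![1, -1, 0, 0; 1, 1, 0, 0; 0, 0, 1, 1; 0, 0, 1, -1] := by
  ext i j; fin_cases i <;> fin_cases j <;> simp [Qmat, Matrix.vecHead, Matrix.vecTail]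

set_option maxHeartbeats 1000000 in
lemma core (t a b u c d : ℝ) :
    !![0, -t, a, -b; t, 0, b, a; -a, -b, 0, t; b, -a, -t, 0] *
      (Qmat * !![0, -u, c, -d; u, 0, d, c; -c, -d, 0, u; d, -c, -u, 0] * Qmat.transpose) =
    (Qmat * !![0, -u, c, -d; u, 0, d, c; -c, -d, 0, u; d, -c, -u, 0] * Qmat.transpose) *
      !![0, -t, a, -b; t, 0, b, a; -a, -b, 0, t; b, -a, -t, 0] := by
  rw [QT]
  ext i j
  fin_cases i <;> fin_cases j <;>
    simp [Qmat, Matrix.mul_apply, Fin.sum_univ_four] <;> ring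

/-- If `X` and `Y` are traceless anti-Hermitian `2 × 2` complex matrices, then `g(X)` and
`P g(Y) Pᵀ` commute. -/
theorem stmt_13 (X Y : Matrix (Fin 2) (Fin 2) ℂ)
    (hX : X.conjTranspose = -X) (hX0 : X.trace = 0)
    (hY : Y.conjTranspose = -Y) (hY0 : Y.trace = 0) :
    gmap X * (Pmat * gmap Y * Pmat.transpose) =
      (Pmat * gmap Y * Pmat.transpose) * gmap X := by
  have hP : Pmat = (1 / Real.sqrt 2) • Qmat := rfl
  rw [gmap_eq X hX hX0, gmap_eq Y hY hY0, hP]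
  simp only [Matrix.transpose_smul, Matrix.smul_mul, Matrix.mul_smul]
  rw [core]
end

section
/- Define π(U₁, U₂) = g(U₁) · P · g(U₂) · Pᵀ for U₁, U₂ ∈ SU(2). Then π(U₁, U₂) is a 4 × 4 real orthogonal matrix with determinant 1 (an element of SO(4)), and π is a group homomorphism from SU(2) × SU(2) to SO(4): π(U₁V₁, U₂V₂) = π(U₁, U₂)·π(V₁, V₂) for all U₁, U₂, V₁, V₂ ∈ SU(2). -/
/-- The map `π(U₁, U₂) = g(U₁) · P · g(U₂) · Pᵀ`. -/
noncomputable def piMap (U₁ U₂ : Matrix (Fin 2) (Fin 2) ℂ) : Matrix (Fin 4) (Fin 4) ℝ :=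
  gmap U₁ * Pmat * gmap U₂ * Pmat.transpose


/-! An element of `SU(2)` is a unit quaternion `[[a, b], [-b̄, ā]]`, and `g` turns it into left
multiplication by that quaternion on `ℍ ≅ ℝ⁴`. Since `g` respects products and conjugate
transposes and `det g(M) = |det M|²`, it maps `SU(2)` into `SO(4)`; conjugation by the orthogonal
matrix `P` preserves `SO(4)`. Conjugation by `P` also turns the left multiplications into
matrices commuting with all of them (right multiplications), and this commutation is exactly what
makes `π` multiplicative. -/

open Matrix ComplexConjugate

section Realification

variable (M N : Matrix (Fin 2) (Fin 2) ℂ)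

lemma gmap_one : gmap 1 = 1 := by
  ext i j
  fin_cases i <;> fin_cases j <;> simp [gmap, one_apply]

lemma gmap_mul : gmap (M * N) = gmap M * gmap N := by
  ext i j
  fin_cases i <;> fin_cases j <;>
    · simp [gmap, mul_apply, Fin.sum_univ_two, Fin.sum_univ_four]
      ring

lemma gmap_conjTranspose : gmap Mᴴ = (gmap M)ᵀ := by
  ext i j
  fin_cases i <;> fin_cases j <;> simp [gmap]

lemma det_gmap : (gmap M).det = Complex.normSq M.det := by
  simp [gmap, det_succ_row_zero, Fin.sum_univ_succ, Fin.succAbove, Complex.normSq_apply]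
  ring

variable {M}

lemma gmap_mem_orthogonalGroup (hM : M ∈ unitaryGroup (Fin 2) ℂ) :
    gmap M ∈ orthogonalGroup (Fin 4) ℝ := by
  rw [mem_orthogonalGroup_iff', ← gmap_conjTranspose, ← gmap_mul, ← star_eq_conjTranspose,
    mem_unitaryGroup_iff'.mp hM, gmap_one]

lemma gmap_mem_specialOrthogonalGroup (hM : M ∈ specialUnitaryGroup (Fin 2) ℂ) :
    gmap M ∈ specialOrthogonalGroup (Fin 4) ℝ := by
  obtain ⟨hunit, hdet⟩ := mem_specialUnitaryGroup_iff.mp hM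
  exact mem_specialOrthogonalGroup_iff.mpr
    ⟨gmap_mem_orthogonalGroup hunit, by rw [det_gmap, hdet, map_one]⟩

end Realification

lemma eq_quaternion_of_mem_specialUnitaryGroup {U : Matrix (Fin 2) (Fin 2) ℂ}
    (hU : U ∈ specialUnitaryGroup (Fin 2) ℂ) :
    U = !![U 0 0, U 0 1; -conj (U 0 1), conj (U 0 0)] := by
  obtain ⟨hunit, hdet⟩ := mem_specialUnitaryGroup_iff.mp hU
  have hstar : star U = adjugate U := by
    rw [← inv_eq_left_inv (mem_unitaryGroup_iff'.mp hunit), inv_def, hdet]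
    simp
  have h00 := congrFun₂ hstar 0 0
  have h10 := congrFun₂ hstar 1 0
  simp only [adjugate_fin_two, star_apply, of_apply, cons_val', cons_val_zero, cons_val_one,
    empty_val', cons_val_fin_one, Complex.star_def] at h00 h10
  ext i j
  fin_cases i <;> fin_cases j <;> simp [h00, h10]

lemma gmap_quaternion (a b : ℂ) :
    gmap !![a, b; -conj b, conj a] =
      !![a.re, -a.im, b.re, -b.im; a.im, a.re, b.im, b.re;
        -b.re, -b.im, a.re, a.im; b.im, -b.re, -a.im, a.re] := by
  ext i j
  fin_cases i <;> fin_cases j <;> simp [gmap]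

lemma Pmat_mul_transpose : Pmat * Pmatᵀ = 1 := by
  ext i j
  fin_cases i <;> fin_cases j <;>
    simp [Pmat, mul_apply, Fin.sum_univ_four, one_apply] <;> ring_nf <;> norm_num

lemma Pmat_mem_orthogonalGroup : Pmat ∈ orthogonalGroup (Fin 4) ℝ :=
  (mem_orthogonalGroup_iff _ _).mpr Pmat_mul_transpose

lemma Pmat_mul_gmap_quaternion_mul_transpose (a b : ℂ) :
    Pmat * gmap !![a, b; -conj b, conj a] * Pmatᵀ =
      !![a.re, -a.im, b.re, b.im; a.im, a.re, b.im, -b.re;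
        -b.re, -b.im, a.re, -a.im; -b.im, b.re, a.im, a.re] := by
  have hs : 1 / √2 * (1 / √2) = (2 : ℝ)⁻¹ := by
    rw [one_div, ← mul_inv, Real.mul_self_sqrt zero_le_two]
  rw [gmap_quaternion, Pmat, transpose_smul, smul_mul, smul_mul, Matrix.mul_smul, smul_smul, hs]
  ext i j
  fin_cases i <;> fin_cases j <;>
    · simp [vecMul, dotProduct, Fin.sum_univ_four]
      ring

lemma commute_gmap_quaternion_Pmat_conj (a b c d : ℂ) :
    Commute (gmap !![a, b; -conj b, conj a])
      (Pmat * gmap !![c, d; -conj d, conj c] * Pmatᵀ) := by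
  rw [gmap_quaternion, Pmat_mul_gmap_quaternion_mul_transpose]
  ext i j
  fin_cases i <;> fin_cases j <;>
    · simp [mul_apply, Fin.sum_univ_four]
      ring

lemma conj_mem_specialOrthogonalGroup {n : Type*} [Fintype n] [DecidableEq n]
    {P A : Matrix n n ℝ} (hP : P ∈ orthogonalGroup n ℝ) (hA : A ∈ specialOrthogonalGroup n ℝ) :
    P * A * Pᵀ ∈ specialOrthogonalGroup n ℝ := by
  have hPdet : P.det * P.det = 1 := by
    simpa using congrArg det ((mem_orthogonalGroup_iff _ _).mp hP)
  rw [mem_specialOrthogonalGroup_iff] at hA ⊢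
  refine ⟨mul_mem (mul_mem hP hA.1) (transpose_mem_unitaryGroup_iff.mpr hP), ?_⟩
  rw [det_mul, det_mul, det_transpose, hA.2]
  linear_combination hPdet

lemma conj_mul_of_mul_eq_one {G : Type*} [Monoid G] {p q : G} (h : q * p = 1) (a b : G) :
    p * (a * b) * q = p * a * q * (p * b * q) := by
  calc p * (a * b) * q = p * a * (q * p) * b * q := by rw [h, mul_one, mul_assoc p a b]
    _ = p * a * q * (p * b * q) := by simp only [mul_assoc]

lemma piMap_eq_mul_conj (U₁ U₂ : Matrix (Fin 2) (Fin 2) ℂ) :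
    piMap U₁ U₂ = gmap U₁ * (Pmat * gmap U₂ * Pmatᵀ) := by
  simp only [piMap, mul_assoc]

lemma piMap_mem_specialOrthogonalGroup {U₁ U₂ : Matrix (Fin 2) (Fin 2) ℂ}
    (hU₁ : U₁ ∈ specialUnitaryGroup (Fin 2) ℂ) (hU₂ : U₂ ∈ specialUnitaryGroup (Fin 2) ℂ) :
    piMap U₁ U₂ ∈ specialOrthogonalGroup (Fin 4) ℝ := by
  rw [piMap_eq_mul_conj]
  exact mul_mem (gmap_mem_specialOrthogonalGroup hU₁)
    (conj_mem_specialOrthogonalGroup Pmat_mem_orthogonalGroup (gmap_mem_specialOrthogonalGroup hU₂))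

lemma piMap_mul {U₁ U₂ V₁ V₂ : Matrix (Fin 2) (Fin 2) ℂ}
    (hU₂ : U₂ ∈ specialUnitaryGroup (Fin 2) ℂ) (hV₁ : V₁ ∈ specialUnitaryGroup (Fin 2) ℂ) :
    piMap (U₁ * V₁) (U₂ * V₂) = piMap U₁ U₂ * piMap V₁ V₂ := by
  have hcomm : Commute (gmap V₁) (Pmat * gmap U₂ * Pmatᵀ) := by
    rw [eq_quaternion_of_mem_specialUnitaryGroup hV₁, eq_quaternion_of_mem_specialUnitaryGroup hU₂]
    exact commute_gmap_quaternion_Pmat_conj _ _ _ _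
  have hPP : Pmatᵀ * Pmat = 1 := (mem_orthogonalGroup_iff' _ _).mp Pmat_mem_orthogonalGroup
  rw [piMap_eq_mul_conj, piMap_eq_mul_conj, piMap_eq_mul_conj, gmap_mul, gmap_mul,
    conj_mul_of_mul_eq_one hPP, mul_assoc, ← mul_assoc (gmap V₁), hcomm.eq]
  simp only [mul_assoc]

/-- For `U₁, U₂ ∈ SU(2)`, the matrix `π(U₁, U₂) = g(U₁) P g(U₂) Pᵀ` lies in `SO(4)`, and
`π` is a group homomorphism `SU(2) × SU(2) → SO(4)`. -/
theorem stmt_14 :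
    (∀ U₁ U₂ : Matrix (Fin 2) (Fin 2) ℂ,
      U₁.conjTranspose * U₁ = 1 ∧ U₁.det = 1 →
      U₂.conjTranspose * U₂ = 1 ∧ U₂.det = 1 →
      (piMap U₁ U₂).transpose * piMap U₁ U₂ = 1 ∧ (piMap U₁ U₂).det = 1) ∧
    (∀ U₁ U₂ V₁ V₂ : Matrix (Fin 2) (Fin 2) ℂ,
      U₁.conjTranspose * U₁ = 1 ∧ U₁.det = 1 →
      U₂.conjTranspose * U₂ = 1 ∧ U₂.det = 1 →
      V₁.conjTranspose * V₁ = 1 ∧ V₁.det = 1 →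
      V₂.conjTranspose * V₂ = 1 ∧ V₂.det = 1 →
      piMap (U₁ * V₁) (U₂ * V₂) = piMap U₁ U₂ * piMap V₁ V₂) := by
  have mem_SU : ∀ U : Matrix (Fin 2) (Fin 2) ℂ,
      Uᴴ * U = 1 ∧ U.det = 1 → U ∈ specialUnitaryGroup (Fin 2) ℂ :=
    fun U hU => ⟨mem_unitaryGroup_iff'.mpr hU.1, hU.2⟩
  refine ⟨fun U₁ U₂ hU₁ hU₂ => ?_, fun U₁ U₂ V₁ V₂ _ hU₂ hV₁ _ => ?_⟩
  · obtain ⟨horth, hdet⟩ := mem_specialOrthogonalGroup_iff.mp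
      (piMap_mem_specialOrthogonalGroup (mem_SU _ hU₁) (mem_SU _ hU₂))
    exact ⟨(mem_orthogonalGroup_iff' _ _).mp horth, hdet⟩
  · exact piMap_mul (mem_SU _ hU₂) (mem_SU _ hV₁)
end
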